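/- The cut rule is admissible in LJpm: if Γ ⇒ α,Δ and Γ,α ⇒ Δ are both derivable in (cut-free) LJpm, then Γ ⇒ Δ is derivable in (cut-free) LJpm. -/

import Mathlib

/-- Propositional formulas: atoms, ⊥, ∨, ∧, ⊃. -/
inductive PFormula : Type
  | atom : ℕ → PFormula
  | bot  : PFormula
  | disj : PFormula → PFormula → PFormula
  | conj : PFormula → PFormula → PFormula
  | impl : PFormula → PFormula → PFormula
  deriving DecidableEq

/-- A Kripke model for intuitionistic propositional logic:
a quasi-ordered nonempty set of worlds with a monotone valuation. -/
structure KripkeModel where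
  W : Type
  ne : Nonempty W
  le : W → W → Prop
  le_refl : ∀ w, le w w
  le_trans : ∀ {a b c}, le a b → le b c → le a c
  V : W → Set ℕ
  V_mono : ∀ {a b}, le a b → V a ⊆ V b

/-- Kripke forcing. -/
def KripkeModel.force (M : KripkeModel) : M.W → PFormula → Prop
  | w, .atom p => p ∈ M.V w
  | _, .bot => False
  | w, .disj a b => M.force w a ∨ M.force w b
  | w, .conj a b => M.force w a ∧ M.force w b
  | w, .impl a b => ∀ v, M.le w v → M.force v a → M.force v b

/-- The multi-succedent sequent calculus LJpm for intuitionistic propositional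
logic (sequents are pairs of finite sets of formulas; weakening is built into
the set formulation of axioms and rules). -/
inductive LJpm : Finset PFormula → Finset PFormula → Prop
  | axAtom {Γ Δ : Finset PFormula} {p : ℕ} :
      PFormula.atom p ∈ Γ → PFormula.atom p ∈ Δ → LJpm Γ Δ
  | axBot {Γ Δ : Finset PFormula} : PFormula.bot ∈ Γ → LJpm Γ Δ
  | disjL {Γ Δ : Finset PFormula} {a b : PFormula} : a.disj b ∈ Γ →
      LJpm (insert a Γ) Δ → LJpm (insert b Γ) Δ → LJpm Γ Δ
  | disjR {Γ Δ : Finset PFormula} {a b : PFormula} : a.disj b ∈ Δ →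
      LJpm Γ (insert a (insert b Δ)) → LJpm Γ Δ
  | conjL {Γ Δ : Finset PFormula} {a b : PFormula} : a.conj b ∈ Γ →
      LJpm (insert a (insert b Γ)) Δ → LJpm Γ Δ
  | conjR {Γ Δ : Finset PFormula} {a b : PFormula} : a.conj b ∈ Δ →
      LJpm Γ (insert a Δ) → LJpm Γ (insert b Δ) → LJpm Γ Δ
  | implL {Γ Δ : Finset PFormula} {a b : PFormula} : a.impl b ∈ Γ →
      LJpm Γ (insert a Δ) → LJpm (insert b Γ) Δ → LJpm Γ Δ
  | implR {Γ Δ : Finset PFormula} {a b : PFormula} : a.impl b ∈ Δ →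
      LJpm (insert a Γ) {b} → LJpm Γ Δ

/-- Intuitionistic validity of a sequent Γ ⇒ Δ. -/
def Valid (Γ Δ : Finset PFormula) : Prop :=
  ∀ (M : KripkeModel) (w : M.W),
    (∀ γ ∈ Γ, M.force w γ) → ∃ δ ∈ Δ, M.force w δ

/-! Kripke semantics validates cut, so it suffices that cut-free LJpm is complete. An underivable
sequent extends to a maximal underivable one among the sequents built from subformulas of the
original; maximality makes it saturated, since for each formula some premise of its rule must be
underivable too. Saturated underivable sequents, ordered by inclusion of antecedents, form a
canonical countermodel. -/

namespace PFormula

def subformulas : PFormula → Finset PFormula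
  | atom p => {atom p}
  | bot => {bot}
  | disj a b => insert (disj a b) (a.subformulas ∪ b.subformulas)
  | conj a b => insert (conj a b) (a.subformulas ∪ b.subformulas)
  | impl a b => insert (impl a b) (a.subformulas ∪ b.subformulas)

theorem mem_subformulas_self (φ : PFormula) : φ ∈ φ.subformulas := by
  cases φ <;> simp [subformulas]

theorem subformulas_subset_of_mem {φ ψ : PFormula} (h : φ ∈ ψ.subformulas) :
    φ.subformulas ⊆ ψ.subformulas := by
  induction ψ with
  | atom | bot => simp_all [subformulas]
  | disj a b iha ihb | conj a b iha ihb | impl a b iha ihb =>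
    simp only [subformulas, Finset.mem_insert, Finset.mem_union] at h ⊢
    rcases h with rfl | h | h
    · rfl
    · exact (iha h).trans (Finset.subset_union_left.trans (Finset.subset_insert _ _))
    · exact (ihb h).trans (Finset.subset_union_right.trans (Finset.subset_insert _ _))

end PFormula

open PFormula

theorem KripkeModel.force_mono (M : KripkeModel) {w v : M.W} (hwv : M.le w v) :
    ∀ {φ : PFormula}, M.force w φ → M.force v φ
  | .atom _, h => M.V_mono hwv h
  | .bot, h => h
  | .disj _ _, h => h.imp (M.force_mono hwv) (M.force_mono hwv)
  | .conj _ _, h => ⟨M.force_mono hwv h.1, M.force_mono hwv h.2⟩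
  | .impl _ _, h => fun u hvu => h u (M.le_trans hwv hvu)

theorem LJpm.valid {Γ Δ : Finset PFormula} (h : LJpm Γ Δ) : Valid Γ Δ := by
  induction h with
  | axAtom hΓ hΔ => exact fun M w hw => ⟨_, hΔ, hw _ hΓ⟩
  | axBot hΓ => exact fun M w hw => (hw _ hΓ).elim
  | disjL hab _ _ iha ihb =>
    intro M w hw
    rcases hw _ hab with ha | hb
    · exact iha M w ((Finset.forall_mem_insert ..).2 ⟨ha, hw⟩)
    · exact ihb M w ((Finset.forall_mem_insert ..).2 ⟨hb, hw⟩)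
  | disjR hab _ ih =>
    intro M w hw
    have h := ih M w hw
    simp only [Finset.exists_mem_insert] at h
    rcases h with ha | hb | hΔ
    exacts [⟨_, hab, .inl ha⟩, ⟨_, hab, .inr hb⟩, hΔ]
  | conjL hab _ ih =>
    intro M w hw
    exact ih M w (by simpa only [Finset.forall_mem_insert] using ⟨(hw _ hab).1, (hw _ hab).2, hw⟩)
  | conjR hab _ _ iha ihb =>
    intro M w hw
    rcases (Finset.exists_mem_insert ..).1 (iha M w hw) with ha | hΔ
    · rcases (Finset.exists_mem_insert ..).1 (ihb M w hw) with hb | hΔ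
      exacts [⟨_, hab, ha, hb⟩, hΔ]
    · exact hΔ
  | implL hab _ _ iha ihb =>
    intro M w hw
    rcases (Finset.exists_mem_insert ..).1 (iha M w hw) with ha | hΔ
    · exact ihb M w ((Finset.forall_mem_insert ..).2 ⟨hw _ hab w (M.le_refl w) ha, hw⟩)
    · exact hΔ
  | implR hab _ ih =>
    refine fun M w hw => ⟨_, hab, fun v hwv ha => ?_⟩
    have hv : ∀ γ ∈ insert _ _, M.force v γ :=
      (Finset.forall_mem_insert ..).2 ⟨ha, fun γ hγ => M.force_mono hwv (hw γ hγ)⟩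
    simpa using ih M v hv

theorem Valid.cut {Γ Δ : Finset PFormula} {α : PFormula} (h₁ : Valid Γ (insert α Δ))
    (h₂ : Valid (insert α Γ) Δ) : Valid Γ Δ := fun M w hw =>
  ((Finset.exists_mem_insert ..).1 (h₁ M w hw)).elim
    (fun hα => h₂ M w ((Finset.forall_mem_insert ..).2 ⟨hα, hw⟩)) id

theorem not_LJpm_empty : ¬LJpm ∅ ∅ := by
  intro h
  cases h <;> simp_all

structure SaturatedSequent where
  ante : Finset PFormula
  succ : Finset PFormula
  not_LJpm : ¬LJpm ante succ
  disj_ante {a b : PFormula} : a.disj b ∈ ante → a ∈ ante ∨ b ∈ ante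
  disj_succ {a b : PFormula} : a.disj b ∈ succ → a ∈ succ ∧ b ∈ succ
  conj_ante {a b : PFormula} : a.conj b ∈ ante → a ∈ ante ∧ b ∈ ante
  conj_succ {a b : PFormula} : a.conj b ∈ succ → a ∈ succ ∨ b ∈ succ
  impl_ante {a b : PFormula} : a.impl b ∈ ante → a ∈ succ ∨ b ∈ ante

def UnderivableIn (S : Finset PFormula) (p : Finset PFormula × Finset PFormula) : Prop :=
  p.1 ⊆ S ∧ p.2 ⊆ S ∧ ¬LJpm p.1 p.2

section Saturation

variable {S Γ Δ : Finset PFormula}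

theorem exists_le_maximal_underivableIn (hΓ : Γ ⊆ S) (hΔ : Δ ⊆ S) (h : ¬LJpm Γ Δ) :
    ∃ p, (Γ, Δ) ≤ p ∧ Maximal (UnderivableIn S) p := by
  have hfin : {p | UnderivableIn S p}.Finite :=
    (S.powerset ×ˢ S.powerset).finite_toSet.subset fun p hp => by
      simpa using ⟨hp.1, hp.2.1⟩
  exact hfin.exists_le_maximal ⟨hΓ, hΔ, h⟩

theorem LJpm_or_subset_of_maximal (hmax : Maximal (UnderivableIn S) (Γ, Δ))
    {Γ' Δ' : Finset PFormula} (hΓ : Γ ⊆ Γ') (hΔ : Δ ⊆ Δ') (hΓS : Γ' ⊆ S) (hΔS : Δ' ⊆ S) :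
    LJpm Γ' Δ' ∨ Γ' ⊆ Γ ∧ Δ' ⊆ Δ := by
  by_cases h : LJpm Γ' Δ'
  · exact .inl h
  · exact .inr (hmax.2 (y := (Γ', Δ')) ⟨hΓS, hΔS, h⟩ ⟨hΓ, hΔ⟩)

theorem LJpm_insert_ante_or_mem (hmax : Maximal (UnderivableIn S) (Γ, Δ)) {a : PFormula}
    (ha : a ∈ S) : LJpm (insert a Γ) Δ ∨ a ∈ Γ :=
  (LJpm_or_subset_of_maximal hmax (Finset.subset_insert a Γ) le_rfl
    (Finset.insert_subset ha hmax.1.1) hmax.1.2.1).imp_right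
    fun h => h.1 (Finset.mem_insert_self a Γ)

theorem LJpm_insert_succ_or_mem (hmax : Maximal (UnderivableIn S) (Γ, Δ)) {a : PFormula}
    (ha : a ∈ S) : LJpm Γ (insert a Δ) ∨ a ∈ Δ :=
  (LJpm_or_subset_of_maximal hmax le_rfl (Finset.subset_insert a Δ) hmax.1.1
    (Finset.insert_subset ha hmax.1.2.1)).imp_right fun h => h.2 (Finset.mem_insert_self a Δ)

theorem LJpm_insert_insert_ante_or_mem (hmax : Maximal (UnderivableIn S) (Γ, Δ))
    {a b : PFormula} (ha : a ∈ S) (hb : b ∈ S) :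
    LJpm (insert a (insert b Γ)) Δ ∨ a ∈ Γ ∧ b ∈ Γ :=
  (LJpm_or_subset_of_maximal hmax ((Finset.subset_insert b Γ).trans (Finset.subset_insert _ _))
    le_rfl (Finset.insert_subset ha (Finset.insert_subset hb hmax.1.1)) hmax.1.2.1).imp_right
    fun h => (Finset.insert_subset_iff.1 h.1).imp_right fun h => h (Finset.mem_insert_self b Γ)

theorem LJpm_insert_insert_succ_or_mem (hmax : Maximal (UnderivableIn S) (Γ, Δ))
    {a b : PFormula} (ha : a ∈ S) (hb : b ∈ S) :
    LJpm Γ (insert a (insert b Δ)) ∨ a ∈ Δ ∧ b ∈ Δ :=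
  (LJpm_or_subset_of_maximal hmax le_rfl
    ((Finset.subset_insert b Δ).trans (Finset.subset_insert _ _)) hmax.1.1
    (Finset.insert_subset ha (Finset.insert_subset hb hmax.1.2.1))).imp_right
    fun h => (Finset.insert_subset_iff.1 h.2).imp_right fun h => h (Finset.mem_insert_self b Δ)

theorem left_mem_and_right_mem_of_closed (hS : ∀ ψ ∈ S, ψ.subformulas ⊆ S) {a b ψ : PFormula}
    (hψ : ψ ∈ S) (h : ψ = a.disj b ∨ ψ = a.conj b ∨ ψ = a.impl b) : a ∈ S ∧ b ∈ S := by
  rcases h with rfl | rfl | rfl <;>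
    exact ⟨hS _ hψ (by simp [subformulas, mem_subformulas_self]),
      hS _ hψ (by simp [subformulas, mem_subformulas_self])⟩

def SaturatedSequent.ofMaximal (hS : ∀ ψ ∈ S, ψ.subformulas ⊆ S)
    (hmax : Maximal (UnderivableIn S) (Γ, Δ)) : SaturatedSequent where
  ante := Γ
  succ := Δ
  not_LJpm := hmax.1.2.2
  disj_ante {a b} hab := by
    obtain ⟨ha, hb⟩ := left_mem_and_right_mem_of_closed hS (hmax.1.1 hab) (.inl rfl)
    by_contra! hne
    exact hmax.1.2.2 <| .disjL hab ((LJpm_insert_ante_or_mem hmax ha).resolve_right hne.1)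
      ((LJpm_insert_ante_or_mem hmax hb).resolve_right hne.2)
  disj_succ {a b} hab := by
    obtain ⟨ha, hb⟩ := left_mem_and_right_mem_of_closed hS (hmax.1.2.1 hab) (.inl rfl)
    exact (LJpm_insert_insert_succ_or_mem hmax ha hb).resolve_left fun h =>
      hmax.1.2.2 (.disjR hab h)
  conj_ante {a b} hab := by
    obtain ⟨ha, hb⟩ := left_mem_and_right_mem_of_closed hS (hmax.1.1 hab) (.inr (.inl rfl))
    exact (LJpm_insert_insert_ante_or_mem hmax ha hb).resolve_left fun h =>
      hmax.1.2.2 (.conjL hab h)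
  conj_succ {a b} hab := by
    obtain ⟨ha, hb⟩ := left_mem_and_right_mem_of_closed hS (hmax.1.2.1 hab) (.inr (.inl rfl))
    by_contra! hne
    exact hmax.1.2.2 <| .conjR hab ((LJpm_insert_succ_or_mem hmax ha).resolve_right hne.1)
      ((LJpm_insert_succ_or_mem hmax hb).resolve_right hne.2)
  impl_ante {a b} hab := by
    obtain ⟨ha, hb⟩ := left_mem_and_right_mem_of_closed hS (hmax.1.1 hab) (.inr (.inr rfl))
    by_contra! hne
    exact hmax.1.2.2 <| .implL hab ((LJpm_insert_succ_or_mem hmax ha).resolve_right hne.1)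
      ((LJpm_insert_ante_or_mem hmax hb).resolve_right hne.2)

end Saturation

theorem SaturatedSequent.exists_superset_of_not_LJpm {Γ Δ : Finset PFormula} (h : ¬LJpm Γ Δ) :
    ∃ w : SaturatedSequent, Γ ⊆ w.ante ∧ Δ ⊆ w.succ := by
  set S := (Γ ∪ Δ).biUnion subformulas
  have hS : ∀ ψ ∈ S, ψ.subformulas ⊆ S := by
    intro ψ hψ
    obtain ⟨θ, hθ, hψθ⟩ := Finset.mem_biUnion.1 hψ
    exact (subformulas_subset_of_mem hψθ).trans (Finset.subset_biUnion_of_mem _ hθ)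
  have hsub : Γ ∪ Δ ⊆ S := fun φ hφ => Finset.mem_biUnion.2 ⟨φ, hφ, mem_subformulas_self φ⟩
  obtain ⟨⟨Γ', Δ'⟩, ⟨hΓ, hΔ⟩, hmax⟩ := exists_le_maximal_underivableIn
    (Finset.union_subset_left hsub) (Finset.union_subset_right hsub) h
  exact ⟨.ofMaximal hS hmax, hΓ, hΔ⟩

def canonicalModel : KripkeModel where
  W := SaturatedSequent
  ne := (SaturatedSequent.exists_superset_of_not_LJpm not_LJpm_empty).elim fun w _ => ⟨w⟩
  le w v := w.ante ⊆ v.ante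
  le_refl _ := subset_rfl
  le_trans := subset_trans
  V w := {p | atom p ∈ w.ante}
  V_mono hwv _ hp := hwv hp

theorem canonicalModel_force_of_mem (φ : PFormula) (w : SaturatedSequent) :
    (φ ∈ w.ante → canonicalModel.force w φ) ∧ (φ ∈ w.succ → ¬canonicalModel.force w φ) := by
  induction φ generalizing w with
  | atom p => exact ⟨id, fun hΔ hΓ => w.not_LJpm (.axAtom hΓ hΔ)⟩
  | bot => exact ⟨fun hΓ => w.not_LJpm (.axBot hΓ), fun _ => id⟩
  | disj a b iha ihb =>
    refine ⟨fun h => (w.disj_ante h).imp (iha w).1 (ihb w).1, fun h hf => ?_⟩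
    exact hf.elim ((iha w).2 (w.disj_succ h).1) ((ihb w).2 (w.disj_succ h).2)
  | conj a b iha ihb =>
    refine ⟨fun h => ⟨(iha w).1 (w.conj_ante h).1, (ihb w).1 (w.conj_ante h).2⟩, fun h hf => ?_⟩
    exact (w.conj_succ h).elim (fun ha => (iha w).2 ha hf.1) (fun hb => (ihb w).2 hb hf.2)
  | impl a b iha ihb =>
    constructor
    · intro h v hwv hva
      exact (v.impl_ante (hwv h)).elim (fun ha => absurd hva ((iha v).2 ha)) (ihb v).1
    · intro h hf
      -- `(⇒⊃)` drops the succedent, so `w.ante, a ⇒ b` is underivable and extends to a world.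
      obtain ⟨v, hv, hvb⟩ :=
        SaturatedSequent.exists_superset_of_not_LJpm fun hab => w.not_LJpm (.implR h hab)
      have hwv : canonicalModel.le w v := (Finset.subset_insert a _).trans hv
      exact (ihb v).2 (hvb (Finset.mem_singleton_self b))
        (hf v hwv ((iha v).1 (hv (Finset.mem_insert_self a _))))

theorem LJpm.of_valid {Γ Δ : Finset PFormula} (h : Valid Γ Δ) : LJpm Γ Δ := by
  by_contra hΓΔ
  obtain ⟨w, hΓ, hΔ⟩ := SaturatedSequent.exists_superset_of_not_LJpm hΓΔ
  obtain ⟨δ, hδ, hwδ⟩ := h canonicalModel w fun γ hγ => (canonicalModel_force_of_mem γ w).1 (hΓ hγ)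
  exact (canonicalModel_force_of_mem δ w).2 (hΔ hδ) hwδ

/-- the cut rule is admissible in cut-free LJpm. -/
theorem LJpm_cut_admissible {Γ Δ : Finset PFormula} {α : PFormula}
    (h₁ : LJpm Γ (insert α Δ)) (h₂ : LJpm (insert α Γ) Δ) : LJpm Γ Δ :=
  LJpm.of_valid (h₁.valid.cut h₂.valid)
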